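/- arXiv:2001.01835 — 3 statements merged into one kernel-verified Lean document; each statement's English description precedes it below -/
import Mathlib

section
/- Let p be a monotone property, and let A₁, A₂ be a partition of A (A₁∪A₂=A, A₁∩A₂=∅). If X₂ is a minimal p-set wrt ⟨A₂, B∪A₁⟩ and X₁ is a minimal p-set wrt ⟨A₁, B∪X₂⟩, then X₁∪X₂ is a minimal p-set wrt ⟨A,B⟩. -/
variable {α : Type*} [DecidableEq α]

def Monop (p : Finset α → Bool) : Prop :=
  p ∅ = false ∧ ∀ X Y : Finset α, X ⊆ Y → p X ≤ p Y

def QPSet (p : Finset α → Bool) (A B X : Finset α) : Prop :=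
  X ⊆ A ∧ p (X ∪ B) = true

def QMinPSet (p : Finset α → Bool) (A B X : Finset α) : Prop :=
  QPSet p A B X ∧ ∀ Y, Y ⊂ X → ¬ QPSet p A B Y

/-!
Both minimal sets are recovered from any p-set `Y ⊆ X₁ ∪ X₂` wrt `⟨A, B⟩`: since `X₁ ⊆ A₁`,
`Y ∩ X₂` is a p-set wrt `⟨A₂, B ∪ A₁⟩`, so it is all of `X₂`; then `Y ∩ X₁` is a p-set wrt
`⟨A₁, B ∪ X₂⟩`, so it is all of `X₁`.
-/

section

variable {p : Finset α → Bool} {A B C X Y : Finset α}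

theorem QMinPSet.eq_of_subset (hX : QMinPSet p A B X) (hYX : Y ⊆ X) (hY : QPSet p A B Y) :
    Y = X :=
  by_contra fun hne => hX.2 Y (hYX.ssubset_of_ne hne) hY

theorem QMinPSet.of_eq_of_subset (hX : QPSet p A B X)
    (hmin : ∀ Y, Y ⊆ X → QPSet p A B Y → Y = X) : QMinPSet p A B X :=
  ⟨hX, fun Y hYX hY => hYX.ne (hmin Y hYX.subset hY)⟩

/-- By monotonicity `Y ∩ X` is a p-set wrt `⟨A, B⟩`, so minimality forces `Y ∩ X = X`. -/
theorem QMinPSet.subset_of_union_subset (hp : Monotone p) (hX : QMinPSet p A B X)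
    (hY : p (Y ∪ C) = true) (hYC : Y ∪ C ⊆ Y ∩ X ∪ B) : X ⊆ Y := by
  have hYX : QPSet p A B (Y ∩ X) :=
    ⟨Finset.inter_subset_right.trans hX.1.1, top_le_iff.1 (hY.symm.trans_le (hp hYC))⟩
  rw [← hX.eq_of_subset Finset.inter_subset_right hYX]
  exact Finset.inter_subset_left

theorem QPSet.union_of_subset {A₁ A₂ X₁ X₂ : Finset α} (h₁ : QPSet p A₁ (B ∪ X₂) X₁)
    (hX₂ : X₂ ⊆ A₂) : QPSet p (A₁ ∪ A₂) B (X₁ ∪ X₂) := by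
  refine ⟨Finset.union_subset_union h₁.1 hX₂, ?_⟩
  rw [Finset.union_right_comm, Finset.union_assoc]
  exact h₁.2

end

theorem stmt5_general (p : Finset α → Bool) (hp : Monop p)
    (A B A₁ A₂ X₁ X₂ : Finset α)
    (hun : A₁ ∪ A₂ = A)
    (h2 : QMinPSet p A₂ (B ∪ A₁) X₂) (h1 : QMinPSet p A₁ (B ∪ X₂) X₁) :
    QMinPSet p A B (X₁ ∪ X₂) := by
  subst hun
  have hmono : Monotone p := fun X Y h => hp.2 X Y h
  refine .of_eq_of_subset (h1.1.union_of_subset h2.1.1) fun Y hY ⟨_, hpY⟩ => ?_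
  have hYX : ∀ y ∈ Y, y ∈ X₁ ∨ y ∈ X₂ := fun y hy => Finset.mem_union.1 (hY hy)
  have hX₁A₁ : ∀ y ∈ X₁, y ∈ A₁ := fun y hy => h1.1.1 hy
  have hX₂ : X₂ ⊆ Y := h2.subset_of_union_subset hmono hpY fun y hy => by
    simp only [Finset.mem_union, Finset.mem_inter] at hy ⊢
    grind
  have hX₁ : X₁ ⊆ Y := h1.subset_of_union_subset hmono hpY fun y hy => by
    simp only [Finset.mem_union, Finset.mem_inter] at hy ⊢
    grind
  exact hY.antisymm (Finset.union_subset hX₁ hX₂)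

theorem stmt5 (p : Finset α → Bool) (hp : Monop p)
    (A B A₁ A₂ X₁ X₂ : Finset α) (hdisj : Disjoint A B)
    (hun : A₁ ∪ A₂ = A) (hd12 : Disjoint A₁ A₂)
    (h2 : QMinPSet p A₂ (B ∪ A₁) X₂) (h1 : QMinPSet p A₁ (B ∪ X₂) X₁) :
    QMinPSet p A B (X₁ ∪ X₂) :=
  stmt5_general p hp A B A₁ A₂ X₁ X₂ hun h2 h1
end

section
/- Let p be a monotone property, A₁,A₂ a partition of A, X₂ a minimal p-set wrt ⟨A₂, B∪A₁⟩ and X₁ a minimal p-set wrt ⟨A₁, B∪X₂⟩. Then for every X ⊂ X₁∪X₂ with X∩X₁ ⊂ X₁, X is not a p-set wrt ⟨A,B⟩. -/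
variable {α : Type*} [DecidableEq α]

theorem Monop.eq_true_of_subset {β : Type*} {p : Finset β → Bool} (hp : Monop p) {X Y : Finset β}
    (hXY : X ⊆ Y) (hX : p X = true) : p Y = true :=
  le_antisymm (Bool.le_true _) (hX ▸ hp.2 X Y hXY)

theorem Finset.union_subset_inter_union_union {X Y B C : Finset α} (h : X ⊆ Y ∪ C) :
    X ∪ B ⊆ X ∩ Y ∪ (B ∪ C) := by
  intro x hx
  have := @h x
  simp only [Finset.mem_union, Finset.mem_inter] at hx this ⊢
  tauto

theorem QPSet.inter_of_subset_union {p : Finset α → Bool} (hp : Monop p)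
    {A B A₁ C X X₁ : Finset α} (hX₁ : X₁ ⊆ A₁) (hXsub : X ⊆ X₁ ∪ C) (hX : QPSet p A B X) :
    QPSet p A₁ (B ∪ C) (X ∩ X₁) :=
  ⟨Finset.inter_subset_right.trans hX₁,
    hp.eq_true_of_subset (Finset.union_subset_inter_union_union hXsub) hX.2⟩

theorem stmt7_general (p : Finset α → Bool) (hp : Monop p)
    (A B A₁ X₁ X₂ : Finset α)
    (h1 : QMinPSet p A₁ (B ∪ X₂) X₁) :
    ∀ X, X ⊂ X₁ ∪ X₂ → X ∩ X₁ ⊂ X₁ → ¬ QPSet p A B X := by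
  intro X hX hXX₁ hpX
  exact h1.2 (X ∩ X₁) hXX₁ (hpX.inter_of_subset_union hp h1.1.1 hX.subset)

theorem stmt7 (p : Finset α → Bool) (hp : Monop p)
    (A B A₁ A₂ X₁ X₂ : Finset α) (hdisj : Disjoint A B)
    (hun : A₁ ∪ A₂ = A) (hd12 : Disjoint A₁ A₂)
    (h2 : QMinPSet p A₂ (B ∪ A₁) X₂) (h1 : QMinPSet p A₁ (B ∪ X₂) X₁) :
    ∀ X, X ⊂ X₁ ∪ X₂ → X ∩ X₁ ⊂ X₁ → ¬ QPSet p A B X :=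
  stmt7_general p hp A B A₁ X₁ X₂ h1
end

section
/- Let p be a monotone property, A₁,A₂ a partition of A, X₂ a minimal p-set wrt ⟨A₂, B∪A₁⟩ and X₁ a minimal p-set wrt ⟨A₁, B∪X₂⟩. Then for every X ⊂ X₁∪X₂ with X∩X₂ ⊂ X₂, X is not a p-set wrt ⟨A,B⟩. -/
variable {α : Type*} [DecidableEq α]

theorem Monop.qpset_inter_of_subset_union {p : Finset α → Bool} (hp : Monop p)
    {B C X Y : Finset α} (hX : p (X ∪ B) = true) (hXYC : X ⊆ Y ∪ C) :
    QPSet p Y (B ∪ C) (X ∩ Y) := by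
  have hcover : X ∪ B ⊆ X ∩ Y ∪ (B ∪ C) := by
    intro a ha
    simp only [Finset.mem_union, Finset.mem_inter] at ha ⊢
    rcases ha with ha | ha
    · rcases Finset.mem_union.1 (hXYC ha) with hY | hC <;> tauto
    · tauto
  exact ⟨Finset.inter_subset_right, top_unique (hX ▸ hp.2 _ _ hcover : true ≤ _)⟩

theorem stmt8_general (p : Finset α → Bool) (hp : Monop p)
    (A B A₁ A₂ X₁ X₂ : Finset α)
    (h2 : QMinPSet p A₂ (B ∪ A₁) X₂) (h1 : QMinPSet p A₁ (B ∪ X₂) X₁) :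
    ∀ X, X ⊂ X₁ ∪ X₂ → X ∩ X₂ ⊂ X₂ → ¬ QPSet p A B X := by
  intro X hX hX2 hXp
  have hXsub : X ⊆ X₂ ∪ A₁ :=
    hX.subset.trans (Finset.union_comm X₁ X₂ ▸ Finset.union_subset_union_right h1.1.1)
  -- `X ∩ X₂` would be a p-set wrt `⟨A₂, B ∪ A₁⟩` strictly inside the minimal `X₂`.
  have hpart := hp.qpset_inter_of_subset_union hXp.2 hXsub
  exact h2.2 _ hX2 ⟨hpart.1.trans h2.1.1, hpart.2⟩

theorem stmt8 (p : Finset α → Bool) (hp : Monop p)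
    (A B A₁ A₂ X₁ X₂ : Finset α) (hdisj : Disjoint A B)
    (hun : A₁ ∪ A₂ = A) (hd12 : Disjoint A₁ A₂)
    (h2 : QMinPSet p A₂ (B ∪ A₁) X₂) (h1 : QMinPSet p A₁ (B ∪ X₂) X₁) :
    ∀ X, X ⊂ X₁ ∪ X₂ → X ∩ X₂ ⊂ X₂ → ¬ QPSet p A B X :=
  stmt8_general p hp A B A₁ A₂ X₁ X₂ h2 h1
end
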